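/- arXiv:2509.25025 — 2 statements merged into one kernel-verified Lean document; each statement's English description precedes it below -/
import Mathlib

section
/- Let k ≥ 2 be an integer and 0 < β < 1 a real number. Let A ⊆ (0,1) be a set whose Lebesgue outer measure satisfies μ*(A) > β/k, and let B ⊆ (0,1) be an open set with Lebesgue measure μ(B) ≥ 1 − β. Then there exist k elements α₁, α₂, …, α_k of A (not necessarily distinct) such that the fractional part of α₁ + α₂ + ⋯ + α_k belongs to B. -/
/-!
Pass to the circle `ℝ/ℤ`: the image `A'` of `A` has measure `> β/k` and the image of `B` is
open with complement of measure `≤ β`. Replacing `A'` by its closure `E` keeps the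
measure bound, and since the image of `B` is open, `k • E` meets it only if `k • A'` does.
Raikov's inequality `μ(X + Y) ≥ min 1 (μ X + μ Y)` for compact `X, Y` gives
`μ(k • E) ≥ min 1 (k μ E) > β`, so `k • E` cannot lie in the complement of the image of `B`.
Raikov's inequality itself is proved by cutting the circle into `p` arcs of length `1/p`
(`p` prime) and applying Cauchy–Davenport in `ZMod p` to the sets of arcs met by `X` and `Y`:
the arcs indexed by the sumset lie in the `2/p`-thickening of `X + Y`, and the bound is off
by `1/p`. Both errors vanish as `p → ∞` because `X + Y` is compact.
-/

open Set MeasureTheory Metric Filter Topology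
open scoped Pointwise ENNReal

theorem IsCompact.nsmul {M : Type*} [TopologicalSpace M] [AddMonoid M] [ContinuousAdd M]
    {s : Set M} (hs : IsCompact s) (n : ℕ) : IsCompact (n • s) := by
  induction n with
  | zero => simp
  | succ n ih => simpa [succ_nsmul] using ih.add hs

theorem nsmul_closure_subset_closure_nsmul {M : Type*} [TopologicalSpace M] [AddMonoid M]
    [ContinuousAdd M] (s : Set M) (n : ℕ) : n • closure s ⊆ closure (n • s) := by
  induction n with
  | zero => rw [zero_nsmul, zero_nsmul]; exact subset_closure
  | succ n ih =>
    rw [succ_nsmul, succ_nsmul, add_subset_iff]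
    exact fun x hx y hy =>
      map_mem_closure₂ continuous_add (ih hx) hy fun a ha b hb => add_mem_add ha hb

theorem AddCircle.volume_le_volume_image_coe {T : ℝ} [Fact (0 < T)] {t : ℝ} {s : Set ℝ}
    (hs : s ⊆ Ioc t (t + T)) : volume s ≤ volume (((↑) : ℝ → AddCircle T) '' s) := by
  have hmk := AddCircle.measurePreserving_mk T t
  calc volume s = volume.restrict (Ioc t (t + T)) s := by
        rw [Measure.restrict_apply' measurableSet_Ioc, inter_eq_left.2 hs]
    _ ≤ volume.restrict (Ioc t (t + T)) ((↑) ⁻¹' (((↑) : ℝ → AddCircle T) '' s)) :=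
        measure_mono (subset_preimage_image _ _)
    _ ≤ volume (((↑) : ℝ → AddCircle T) '' s) :=
        hmk.map_eq ▸ Measure.le_map_apply hmk.measurable.aemeasurable _

namespace UnitAddCircle

theorem periodic_floor_mul_cast (p : ℕ) :
    Function.Periodic (fun x : ℝ => ((⌊p * x⌋ : ℤ) : ZMod p)) 1 := by
  intro x
  simp [mul_add]

/-- `digit p (x mod 1) = ⌊p x⌋ mod p`: its fibres are the arcs `[j/p, (j+1)/p)` of the circle. -/
noncomputable def digit (p : ℕ) : UnitAddCircle → ZMod p :=
  (periodic_floor_mul_cast p).lift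

@[simp]
theorem digit_coe (p : ℕ) (x : ℝ) : digit p x = ((⌊p * x⌋ : ℤ) : ZMod p) :=
  (periodic_floor_mul_cast p).lift_coe x

theorem digit_add_coe_div (p : ℕ) [NeZero p] (z : UnitAddCircle) (n : ℕ) :
    digit p (z + ((n / p : ℝ) : UnitAddCircle)) = digit p z + n := by
  induction z using QuotientAddGroup.induction_on with
  | H x =>
    rw [← AddCircle.coe_add, digit_coe, digit_coe, mul_add,
      mul_div_cancel₀ _ (Nat.cast_ne_zero.2 (NeZero.ne p))]
    push_cast [Int.floor_add_natCast]
    rfl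

theorem measurableSet_digit_preimage (p : ℕ) (s : Set (ZMod p)) :
    MeasurableSet (digit p ⁻¹' s) := by
  have hfloor : Measurable fun z : UnitAddCircle => ⌊p * (AddCircle.equivIco 1 0 z : ℝ)⌋ :=
    Int.measurable_floor.comp ((measurable_const_mul _).comp
      (measurable_subtype_coe.comp (AddCircle.measurableEquivIco 1 0).measurable))
  have : digit p ⁻¹' s = (fun z => ⌊p * (AddCircle.equivIco 1 0 z : ℝ)⌋) ⁻¹' (Int.cast ⁻¹' s) := by
    ext z
    have hz := digit_coe p (AddCircle.equivIco 1 0 z)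
    rw [AddCircle.coe_equivIco] at hz
    simp [hz]
  exact this ▸ hfloor (MeasurableSet.of_discrete)

theorem volume_digit_preimage_singleton_eq (p : ℕ) [NeZero p] (j : ZMod p) :
    volume (digit p ⁻¹' {j}) = volume (digit p ⁻¹' {0}) := by
  have : digit p ⁻¹' {0} = (· + ((j.val / p : ℝ) : UnitAddCircle)) ⁻¹' (digit p ⁻¹' {j}) := by
    ext z
    simp only [mem_preimage, mem_singleton_iff, digit_add_coe_div, ZMod.natCast_zmod_val,
      add_eq_right]
  rw [this, measure_preimage_add_right]

theorem volume_digit_preimage (p : ℕ) [NeZero p] (F : Finset (ZMod p)) :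
    volume (digit p ⁻¹' F) = F.card * (p : ℝ≥0∞)⁻¹ := by
  have hsum (F : Finset (ZMod p)) : volume (digit p ⁻¹' F) = F.card * volume (digit p ⁻¹' {0}) := by
    rw [← sum_measure_preimage_singleton F fun j _ => measurableSet_digit_preimage p _]
    simp [volume_digit_preimage_singleton_eq]
  have h0 : volume (digit p ⁻¹' {0}) = (p : ℝ≥0∞)⁻¹ := by
    refine ENNReal.eq_inv_of_mul_eq_one_left ?_
    simpa [mul_comm] using (hsum Finset.univ).symm
  rw [hsum, h0]

theorem dist_le_of_digit_eq_add {p : ℕ} [NeZero p] {z a b : UnitAddCircle}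
    (h : digit p z = digit p a + digit p b) : dist z (a + b) ≤ 2 / p := by
  induction z using QuotientAddGroup.induction_on with | H ζ =>
  induction a using QuotientAddGroup.induction_on with | H α =>
  induction b using QuotientAddGroup.induction_on with | H β =>
  obtain ⟨q, hq⟩ : (p : ℤ) ∣ ⌊p * ζ⌋ - ⌊p * α⌋ - ⌊p * β⌋ := by
    rw [← ZMod.intCast_zmod_eq_zero_iff_dvd]
    simp only [digit_coe] at h
    push_cast
    rw [h]; ring
  have hp : (0 : ℝ) < p := Nat.cast_pos.2 (NeZero.pos p)
  have hq' : ((⌊p * ζ⌋ - ⌊p * α⌋ - ⌊p * β⌋ : ℤ) : ℝ) = p * q := by exact_mod_cast hq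
  push_cast at hq'
  -- `p (ζ - α - β - q) = fract (p ζ) - fract (p α) - fract (p β) ∈ (-2, 1)`.
  have := Int.floor_le (p * ζ)
  have := Int.lt_floor_add_one (p * ζ)
  have := Int.floor_le (p * α)
  have := Int.lt_floor_add_one (p * α)
  have := Int.floor_le (p * β)
  have := Int.lt_floor_add_one (p * β)
  rw [dist_eq_norm, ← AddCircle.coe_add, ← AddCircle.coe_sub, UnitAddCircle.norm_eq]
  refine (round_le _ q).trans ?_
  rw [abs_le, le_div_iff₀ hp, ← neg_div, div_le_iff₀ hp]
  constructor <;> nlinarith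

theorem min_one_add_le_volume_cthickening_add {p : ℕ} (hp : p.Prime) {A B : Set UnitAddCircle}
    (hA : A.Nonempty) (hB : B.Nonempty) :
    min 1 (volume A + volume B) ≤ volume (cthickening (2 / p) (A + B)) + (p : ℝ≥0∞)⁻¹ := by
  have := Fact.mk hp
  obtain ⟨FA, hFA⟩ : ∃ F : Finset (ZMod p), ↑F = digit p '' A :=
    ⟨_, Finite.coe_toFinset (toFinite _)⟩
  obtain ⟨FB, hFB⟩ : ∃ F : Finset (ZMod p), ↑F = digit p '' B :=
    ⟨_, Finite.coe_toFinset (toFinite _)⟩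
  have hvol_le {S : Set UnitAddCircle} {F : Finset (ZMod p)} (hF : ↑F = digit p '' S) :
      volume S ≤ F.card * (p : ℝ≥0∞)⁻¹ := by
    rw [← volume_digit_preimage, hF]
    exact measure_mono (subset_preimage_image _ _)
  have hsumset : (FA + FB).card * (p : ℝ≥0∞)⁻¹ ≤ volume (cthickening (2 / p) (A + B)) := by
    rw [← volume_digit_preimage, Finset.coe_add, hFA, hFB]
    refine measure_mono ?_
    rintro z ⟨_, ⟨a, ha, rfl⟩, _, ⟨b, hb, rfl⟩, hz⟩
    exact mem_cthickening_of_dist_le z (a + b) _ _ (add_mem_add ha hb)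
      (dist_le_of_digit_eq_add hz.symm)
  have hcd := ZMod.cauchy_davenport hp (Finset.coe_nonempty.1 (hFA ▸ hA.image _))
    (Finset.coe_nonempty.1 (hFB ▸ hB.image _))
  rcases le_or_gt p (FA.card + FB.card - 1) with hfull | hpartial
  · rw [min_eq_left hfull] at hcd
    calc min 1 (volume A + volume B) ≤ 1 := min_le_left _ _
      _ = p * (p : ℝ≥0∞)⁻¹ := (ENNReal.mul_inv_cancel (by simpa using hp.ne_zero) (by simp)).symm
      _ ≤ (FA + FB).card * (p : ℝ≥0∞)⁻¹ := by gcongr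
      _ ≤ _ := hsumset.trans le_self_add
  · rw [min_eq_right hpartial.le] at hcd
    calc min 1 (volume A + volume B) ≤ volume A + volume B := min_le_right _ _
      _ ≤ FA.card * (p : ℝ≥0∞)⁻¹ + FB.card * (p : ℝ≥0∞)⁻¹ := add_le_add (hvol_le hFA) (hvol_le hFB)
      _ = (FA.card + FB.card : ℕ) * (p : ℝ≥0∞)⁻¹ := by push_cast; ring
      _ ≤ ((FA + FB).card + 1 : ℕ) * (p : ℝ≥0∞)⁻¹ := by gcongr ?_ * _; norm_cast; omega
      _ = (FA + FB).card * (p : ℝ≥0∞)⁻¹ + (p : ℝ≥0∞)⁻¹ := by push_cast; ring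
      _ ≤ _ := by gcongr

theorem min_one_add_le_volume_add {A B : Set UnitAddCircle} (hA : IsCompact A) (hB : IsCompact B)
    (hA' : A.Nonempty) (hB' : B.Nonempty) : min 1 (volume A + volume B) ≤ volume (A + B) := by
  choose p hp_ge hp_prime using Nat.exists_infinite_primes
  have hp_top : Tendsto p atTop atTop := tendsto_atTop_mono hp_ge tendsto_id
  have h_thick : Tendsto (fun n => volume (cthickening (2 / p n) (A + B))) atTop
      (𝓝 (volume (A + B))) :=
    (tendsto_measure_cthickening_of_isCompact (hA.add hB)).comp
      (tendsto_const_nhds.div_atTop (tendsto_natCast_atTop_atTop.comp hp_top))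
  have h_inv : Tendsto (fun n => (p n : ℝ≥0∞)⁻¹) atTop (𝓝 0) :=
    ENNReal.tendsto_inv_nat_nhds_zero.comp hp_top
  simpa using ge_of_tendsto (h_thick.add h_inv) (Eventually.of_forall fun n =>
    min_one_add_le_volume_cthickening_add (hp_prime n) hA' hB')

theorem min_one_nsmul_le_volume_nsmul {E : Set UnitAddCircle} (hE : IsCompact E)
    (hE' : E.Nonempty) (n : ℕ) : min 1 (n * volume E) ≤ volume (n • E) := by
  induction n with
  | zero => simp
  | succ n ih =>
    calc min 1 ((n + 1 : ℕ) * volume E) ≤ min 1 (min 1 (n * volume E) + volume E) := by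
          push_cast
          rcases le_total (n * volume E) 1 with h | h
          · rw [min_eq_right h, add_mul, one_mul]
          · rw [min_eq_left h, min_eq_left (le_self_add : (1 : ℝ≥0∞) ≤ 1 + volume E)]
            exact min_le_left _ _
      _ ≤ min 1 (volume (n • E) + volume E) := by gcongr
      _ ≤ volume (n • E + E) := min_one_add_le_volume_add (hE.nsmul n) hE hE'.nsmul hE'
      _ = volume ((n + 1) • E) := by rw [succ_nsmul]

theorem nsmul_inter_nonempty {n : ℕ} {E U : Set UnitAddCircle} (hE : IsCompact E)
    (hE' : E.Nonempty) (hU : volume Uᶜ < min 1 (n * volume E)) : (n • E ∩ U).Nonempty := by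
  by_contra h
  have hsub : n • E ⊆ Uᶜ := fun x hx hxU => h ⟨x, hx, hxU⟩
  exact (min_one_nsmul_le_volume_nsmul hE hE' n |>.trans (measure_mono hsub)).not_gt hU

theorem volume_compl_image_coe_le {s : Set ℝ} (hs : s ⊆ Ioo 0 1) (hs_open : IsOpen s) :
    volume (((↑) : ℝ → UnitAddCircle) '' s)ᶜ ≤ 1 - volume s := by
  rw [measure_compl (QuotientAddGroup.isOpenMap_coe s hs_open).measurableSet
    (measure_ne_top _ _), UnitAddCircle.measure_univ]
  exact tsub_le_tsub_left (AddCircle.volume_le_volume_image_coe (t := 0)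
    (by simpa using hs.trans Ioo_subset_Ioc_self)) 1

theorem exists_fract_sum_eq_of_mem_nsmul {k : ℕ} {A : Set ℝ} {b : ℝ} (hb : b ∈ Ico 0 1)
    (h : (b : UnitAddCircle) ∈ k • (((↑) : ℝ → UnitAddCircle) '' A)) :
    ∃ g : Fin k → ℝ, (∀ i, g i ∈ A) ∧ Int.fract (∑ i, g i) = b := by
  obtain ⟨g, hg, hgb⟩ := mem_nsmul_iff_sum.1 h
  choose a ha hag using hg
  refine ⟨a, ha, (AddCircle.coe_eq_coe_iff_of_mem_Ico (p := 1) (a := 0)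
    (by rw [zero_add]; exact ⟨Int.fract_nonneg _, Int.fract_lt_one _⟩) (by simpa using hb)).1 ?_⟩
  rw [AddCircle.coe_fract, ← hgb, ← funext hag]
  exact map_sum (QuotientAddGroup.mk' _) a _

end UnitAddCircle

theorem modular_brunn_minkowski_general (k : ℕ) (hk : 2 ≤ k) (β : ℝ) (hβ1 : β < 1)
    (A B : Set ℝ) (hA : A ⊆ Set.Ioo 0 1)
    (hAmeas : MeasureTheory.volume A > ENNReal.ofReal (β / k))
    (hBopen : IsOpen B) (hB : B ⊆ Set.Ioo 0 1)
    (hBmeas : MeasureTheory.volume B ≥ ENNReal.ofReal (1 - β)) :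
    ∃ g : Fin k → ℝ, (∀ i, g i ∈ A) ∧ Int.fract (∑ i, g i) ∈ B := by
  have hk0 : k ≠ 0 := by omega
  set E := closure (((↑) : ℝ → UnitAddCircle) '' A)
  set U := ((↑) : ℝ → UnitAddCircle) '' B
  have hE : ENNReal.ofReal (β / k) < volume E :=
    hAmeas.trans_le <| (AddCircle.volume_le_volume_image_coe (t := 0)
      (by simpa using hA.trans Ioo_subset_Ioc_self)).trans (measure_mono subset_closure)
  have hU : volume Uᶜ ≤ ENNReal.ofReal β :=
    (UnitAddCircle.volume_compl_image_coe_le hB hBopen).trans <|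
      (tsub_le_tsub_left hBmeas 1).trans <| tsub_le_iff_right.2 <| by simpa using ENNReal.ofReal_add_le (p := β) (q := 1 - β)
  have hkE : ENNReal.ofReal β < min 1 (k * volume E) := by
    refine lt_min (ENNReal.ofReal_lt_one.2 hβ1) ?_
    calc ENNReal.ofReal β = k * ENNReal.ofReal (β / k) := by
          rw [← ENNReal.ofReal_natCast, ← ENNReal.ofReal_mul (Nat.cast_nonneg k),
            mul_div_cancel₀ _ (Nat.cast_ne_zero.2 hk0)]
      _ < k * volume E := ENNReal.mul_lt_mul_right (by simpa using hk0) (by simp) hE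
  have hE_ne : E.Nonempty := ((nonempty_of_measure_ne_zero (ne_bot_of_gt hAmeas)).image _).closure
  have hkE_U : (k • E ∩ U).Nonempty :=
    UnitAddCircle.nsmul_inter_nonempty isClosed_closure.isCompact hE_ne (hU.trans_lt hkE)
  obtain ⟨_, hz, b, hb, rfl⟩ := (closure_inter_open_nonempty_iff
    (QuotientAddGroup.isOpenMap_coe B hBopen)).1
    (hkE_U.mono (inter_subset_inter_left _ (nsmul_closure_subset_closure_nsmul _ k)))
  obtain ⟨g, hg, hgb⟩ :=
    UnitAddCircle.exists_fract_sum_eq_of_mem_nsmul (Ioo_subset_Ico_self (hB hb)) hz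
  exact ⟨g, hg, hgb ▸ hb⟩

/-- **Modular Brunn–Minkowski (Theorem 2).**
Let `k ≥ 2` and `0 < β < 1`. Let `A ⊆ (0,1)` have Lebesgue outer measure `> β/k`
and let `B ⊆ (0,1)` be open with Lebesgue measure `≥ 1 - β`. Then some sum of `k`
elements of `A` lies in `B` modulo 1. -/
theorem modular_brunn_minkowski (k : ℕ) (hk : 2 ≤ k) (β : ℝ) (hβ0 : 0 < β) (hβ1 : β < 1)
    (A B : Set ℝ) (hA : A ⊆ Set.Ioo 0 1)
    (hAmeas : MeasureTheory.volume A > ENNReal.ofReal (β / k))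
    (hBopen : IsOpen B) (hB : B ⊆ Set.Ioo 0 1)
    (hBmeas : MeasureTheory.volume B ≥ ENNReal.ofReal (1 - β)) :
    ∃ g : Fin k → ℝ, (∀ i, g i ∈ A) ∧ Int.fract (∑ i, g i) ∈ B :=
  modular_brunn_minkowski_general k hk β hβ1 A B hA hAmeas hBopen hB hBmeas
end

section
/- Let k ≥ 2 be an integer and 0 < β < 1 a real number. Let A ⊆ (0,1) be an open set with Lebesgue measure μ(A) > β/k. Then the set {frac(a₁ + a₂ + ⋯ + a_k) : aᵢ ∈ A for 1 ≤ i ≤ k} ⊆ [0,1), i.e., the image of the k-fold sumset of A under reduction modulo 1, has Lebesgue measure strictly greater than β. -/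
/-!
Choose a large prime `p` and the set `T` of indices `t < p` whose cells `(t/p, (t+1)/p)` lie in
`A`; inner regularity makes `#T / p > β / k`. Sums of one point from each of the cells
`t₁, …, t_k` fill `((t₁ + ⋯ + t_k)/p, (t₁ + ⋯ + t_k + k)/p)`, so `k • A` contains every cell
indexed by `k • T + {0, …, k - 1}`, and modulo `1` every cell indexed by a residue mod `p` of
such an index. Cauchy–Davenport in `ZMod p` yields at least `min p (k * #T)` residues, hence
measure at least `min 1 (k * #T / p) > β`.
-/

open Finset MeasureTheory Set Filter
open scoped Pointwise

theorem exists_sum_eq_of_mem_Ioo_sum {ι 𝕜 : Type*} [Fintype ι] [Field 𝕜] [LinearOrder 𝕜]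
    [IsStrictOrderedRing 𝕜] {a b : ι → 𝕜} (hab : ∀ i, a i < b i) {y : 𝕜}
    (hy : y ∈ Ioo (∑ i, a i) (∑ i, b i)) :
    ∃ g : ι → 𝕜, (∀ i, g i ∈ Ioo (a i) (b i)) ∧ ∑ i, g i = y := by
  have hpos : 0 < ∑ i, b i - ∑ i, a i := sub_pos.2 (hy.1.trans hy.2)
  set t := (y - ∑ i, a i) / (∑ i, b i - ∑ i, a i)
  have ht0 : 0 < t := div_pos (sub_pos.2 hy.1) hpos
  have ht1 : t < 1 := (div_lt_one hpos).2 (by linarith [hy.2])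
  refine ⟨fun i => a i + t * (b i - a i), fun i => ⟨?_, ?_⟩, ?_⟩
  · nlinarith [hab i]
  · nlinarith [hab i]
  · rw [Finset.sum_add_distrib, ← Finset.mul_sum, Finset.sum_sub_distrib,
      div_mul_cancel₀ _ hpos.ne']
    ring

namespace ZMod

theorem min_le_card_nsmul {p : ℕ} (hp : p.Prime) {s : Finset (ZMod p)} (hs : s.Nonempty) :
    ∀ n : ℕ, min p (n * (#s - 1) + 1) ≤ #(n • s)
  | 0 => by simp
  | n + 1 => by
    have ih := min_le_card_nsmul hp hs n
    have hcd := cauchy_davenport hp (hs.nsmul (n := n)) hs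
    rw [succ_nsmul, Nat.succ_mul]
    have := hs.card_pos
    omega

theorem card_image_natCast_of_subset_range {p : ℕ} [NeZero p] {s : Finset ℕ} (hs : s ⊆ range p) :
    #(s.image (Nat.cast : ℕ → ZMod p)) = #s :=
  card_image_of_injOn fun a ha b hb hab => by
    simpa [ZMod.val_cast_of_lt (mem_range.1 (hs ha)), ZMod.val_cast_of_lt (mem_range.1 (hs hb))]
      using congrArg ZMod.val hab

end ZMod

theorem min_le_card_image_mod_nsmul_add_range {p : ℕ} (hp : p.Prime) {T : Finset ℕ}
    (hT : T.Nonempty) (hTp : T ⊆ range p) {k : ℕ} (hk : 0 < k) (hkp : k ≤ p) :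
    min p (k * #T) ≤ #((k • T + range k).image (· % p)) := by
  have : NeZero p := ⟨hp.ne_zero⟩
  let φ := Nat.castAddMonoidHom (ZMod p)
  have hmod : (k • T + range k).image (· % p) =
      ((k • T + range k).image φ).image ZMod.val := by
    rw [Finset.image_image]; congr 1; ext n; simp [φ, ZMod.val_natCast]
  have hφ : (k • T + range k).image φ = k • T.image φ + (range k).image φ := by
    rw [Finset.image_add, Finset.image_nsmul]
  have hT' : #(T.image φ) = #T := ZMod.card_image_natCast_of_subset_range hTp
  have hJ : #((range k).image φ) = k :=
    (ZMod.card_image_natCast_of_subset_range (range_subset_range.2 hkp)).trans (card_range k)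
  have hsum := ZMod.min_le_card_nsmul hp (hT.image φ) k
  have hcd := ZMod.cauchy_davenport hp ((hT.image φ).nsmul (n := k))
    ((nonempty_range_iff.2 hk.ne').image φ)
  rw [hmod, Finset.card_image_of_injective _ (ZMod.val_injective p), hφ]
  rw [hT'] at hsum
  rw [hJ] at hcd
  have : k * (#T - 1) + k = k * #T := by
    rw [Nat.mul_sub_one]; have := Nat.le_mul_of_pos_right k hT.card_pos; omega
  omega

def gridCell (p n : ℕ) : Set ℝ := Ioo ((n : ℝ) / p) ((n + 1) / p)

theorem sum_ofReal_add_one_div_sub_div (s : Finset ℕ) (p : ℕ) :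
    ∑ n ∈ s, ENNReal.ofReal (((n : ℝ) + 1) / p - n / p) = ENNReal.ofReal (#s / p) := by
  have hstep : ∀ n : ℕ, ((n : ℝ) + 1) / p - n / p = 1 / p := fun n => by ring
  simp only [hstep]
  rw [sum_const, ← ENNReal.ofReal_nsmul, nsmul_eq_mul, mul_one_div]

theorem volume_biUnion_gridCell (s : Finset ℕ) (p : ℕ) :
    volume (⋃ n ∈ s, gridCell p n) = ENNReal.ofReal (#s / p) := by
  have hmono : Monotone fun n : ℕ => (n : ℝ) / p := fun m n h =>
    div_le_div_of_nonneg_right (by exact_mod_cast h) p.cast_nonneg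
  rw [measure_biUnion_finset (f := gridCell p) (fun m _ n _ h => ?_)
    (fun n _ => measurableSet_Ioo)]
  · simp only [gridCell, Real.volume_Ioo, sum_ofReal_add_one_div_sub_div]
  · have hdisj := hmono.pairwise_disjoint_on_Ioo_succ h
    simp only [Order.succ_eq_add_one, Nat.cast_add_one] at hdisj
    exact hdisj

theorem gridCell_mod_subset_image_fract {p : ℕ} (hp : 0 < p) (N : ℕ) :
    gridCell p (N % p) ⊆ Int.fract '' gridCell p N := by
  rintro x ⟨hx1, hx2⟩
  have hp' : (0 : ℝ) < p := by exact_mod_cast hp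
  have hN : (N : ℝ) = p * (N / p : ℕ) + (N % p : ℕ) := by
    exact_mod_cast (Nat.div_add_mod N p).symm
  have hlo : (N : ℝ) / p = (N / p : ℕ) + (N % p : ℕ) / p := by rw [hN]; field_simp
  have hhi : ((N : ℝ) + 1) / p = (N / p : ℕ) + ((N % p : ℕ) + 1) / p := by
    rw [hN]; field_simp; ring
  have hx0 : 0 ≤ x := (by positivity : (0 : ℝ) ≤ (N % p : ℕ) / p).trans hx1.le
  have hx1' : x < 1 := hx2.trans_le <| (div_le_one hp').2 <| by
    exact_mod_cast Nat.mod_lt N hp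
  refine ⟨x + (N / p : ℕ), ⟨by linarith, by linarith⟩, ?_⟩
  rw [Int.fract_add_natCast, Int.fract_eq_self.2 ⟨hx0, hx1'⟩]

theorem gridCell_subset_nsmul {A : Set ℝ} {T : Finset ℕ} {p k N : ℕ} (hp : 0 < p)
    (hT : ∀ t ∈ T, gridCell p t ⊆ A) (hN : N ∈ k • T + range k) : gridCell p N ⊆ k • A := by
  obtain ⟨M, hM, j, hj, rfl⟩ := Finset.mem_add.1 hN
  rw [← Finset.mem_coe, Finset.coe_nsmul] at hM
  obtain ⟨f, hfT, rfl⟩ := Set.mem_nsmul_iff_sum.1 hM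
  have hp' : (0 : ℝ) < p := by exact_mod_cast hp
  have hjk : (j : ℝ) + 1 ≤ k := by exact_mod_cast mem_range.1 hj
  have hsa : ∑ i, (f i : ℝ) / p = (∑ i, (f i : ℝ)) / p := (Finset.sum_div ..).symm
  have hsb : ∑ i, ((f i : ℝ) + 1) / p = (∑ i, (f i : ℝ) + k) / p := by
    rw [← Finset.sum_div, Finset.sum_add_distrib]; simp
  rintro y ⟨hy1, hy2⟩
  push_cast at hy1 hy2
  have hy : y ∈ Ioo (∑ i, (f i : ℝ) / p) (∑ i, ((f i : ℝ) + 1) / p) := by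
    rw [hsa, hsb]
    constructor
    · exact lt_of_le_of_lt (div_le_div_of_nonneg_right (by simp) hp'.le) hy1
    · exact hy2.trans_le (div_le_div_of_nonneg_right (by linarith) hp'.le)
  obtain ⟨g, hg, rfl⟩ := exists_sum_eq_of_mem_Ioo_sum (fun i => by gcongr; linarith) hy
  exact Set.mem_nsmul_iff_sum.2 ⟨g, fun i => hT _ (hfT i) (hg i), rfl⟩

theorem exists_lt_mem_Icc_div {x : ℝ} (hx : x ∈ Set.Ico 0 1) {p : ℕ} (hp : 0 < p) :
    ∃ t < p, x ∈ Icc ((t : ℝ) / p) ((t + 1) / p) := by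
  have hp' : (0 : ℝ) < p := by exact_mod_cast hp
  have hxp : 0 ≤ x * p := mul_nonneg hx.1 hp'.le
  refine ⟨⌊x * p⌋₊, ?_, ?_, ?_⟩
  · exact_mod_cast (Nat.floor_le hxp).trans_lt (by nlinarith [hx.2] : x * p < p)
  · rw [div_le_iff₀ hp']; exact Nat.floor_le hxp
  · rw [le_div_iff₀ hp']; exact (Nat.lt_floor_add_one _).le

open Classical in
noncomputable def gridCellsIn (A : Set ℝ) (p : ℕ) : Finset ℕ :=
  (range p).filter fun t => gridCell p t ⊆ A

theorem gridCellsIn_subset_range (A : Set ℝ) (p : ℕ) : gridCellsIn A p ⊆ range p := by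
  classical exact filter_subset _ _

theorem gridCell_subset_of_mem_gridCellsIn {A : Set ℝ} {p t : ℕ} (ht : t ∈ gridCellsIn A p) :
    gridCell p t ⊆ A := by
  classical exact (mem_filter.1 ht).2

-- A compact `K ⊆ A` of almost full measure is covered by the grid cells meeting it, and these
-- lie in a thickening of `K` contained in `A` once the mesh is small.
theorem eventually_lt_volume_gridCellsIn {A : Set ℝ} (hA : IsOpen A) (hA01 : A ⊆ Set.Ico 0 1)
    {c : ENNReal} (hc : c < volume A) :
    ∀ᶠ p : ℕ in atTop, c < ENNReal.ofReal (#(gridCellsIn A p) / p) := by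
  obtain ⟨K, hKA, hK, hcK⟩ := hA.exists_lt_isCompact hc
  obtain ⟨δ, hδ, hKδ⟩ := hK.exists_thickening_subset_open hA hKA
  filter_upwards [eventually_gt_atTop 0,
    tendsto_one_div_atTop_nhds_zero_nat.eventually (gt_mem_nhds hδ)] with p hp hpδ
  have hcover : K ⊆ ⋃ t ∈ gridCellsIn A p, Icc ((t : ℝ) / p) ((t + 1) / p) := by
    intro x hx
    obtain ⟨t, htp, hxt⟩ := exists_lt_mem_Icc_div (hA01 (hKA hx)) hp
    have hcell : Icc ((t : ℝ) / p) ((t + 1) / p) ⊆ A := fun y hy =>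
      hKδ <| Metric.mem_thickening_iff.2 ⟨x, hx, by
        rw [Real.dist_eq, abs_lt]
        have : ((t : ℝ) + 1) / p = t / p + 1 / p := by ring
        constructor <;> linarith [hy.1, hy.2, hxt.1, hxt.2]⟩
    refine mem_iUnion₂.2 ⟨t, ?_, hxt⟩
    classical
    exact mem_filter.2 ⟨mem_range.2 htp, Ioo_subset_Icc_self.trans hcell⟩
  calc c < volume K := hcK
    _ ≤ volume (⋃ t ∈ gridCellsIn A p, Icc ((t : ℝ) / p) ((t + 1) / p)) := measure_mono hcover
    _ ≤ ∑ t ∈ gridCellsIn A p, volume (Icc ((t : ℝ) / p) ((t + 1) / p)) :=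
      measure_biUnion_finset_le _ _
    _ = ENNReal.ofReal (#(gridCellsIn A p) / p) := by
      simp only [Real.volume_Icc, sum_ofReal_add_one_div_sub_div]

theorem biUnion_gridCell_mod_subset_image_fract_nsmul {A : Set ℝ} {T : Finset ℕ} {p k : ℕ}
    (hp : 0 < p) (hT : ∀ t ∈ T, gridCell p t ⊆ A) :
    ⋃ r ∈ (k • T + range k).image (· % p), gridCell p r ⊆ Int.fract '' (k • A) := by
  simp only [Finset.set_biUnion_finset_image, iUnion₂_subset_iff]
  exact fun N hN => (gridCell_mod_subset_image_fract hp N).trans <| image_mono <|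
    gridCell_subset_nsmul hp hT hN

theorem lt_div_of_min_le {β : ℝ} {k t d p : ℕ} (hβ : β < 1) (hk : 0 < k) (hp : 0 < p)
    (hβt : β / k < t / p) (hd : min p (k * t) ≤ d) : β < d / p := by
  have hp' : (0 : ℝ) < p := by exact_mod_cast hp
  rcases le_total p (k * t) with h | h
  · have hpd : (p : ℝ) ≤ d := by exact_mod_cast (min_eq_left h) ▸ hd
    exact hβ.trans_le ((one_le_div hp').2 hpd)
  · have hktd : (k : ℝ) * t ≤ d := by exact_mod_cast (min_eq_right h) ▸ hd
    calc β = k * (β / k) := by field_simp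
      _ < k * (t / p) := by gcongr
      _ ≤ d / p := by rw [← mul_div_assoc]; gcongr

theorem modular_brunn_minkowski_measure_general (k : ℕ) (hk : 2 ≤ k) (β : ℝ)
    (hβ1 : β < 1) (A : Set ℝ) (hAopen : IsOpen A)
    (hA : A ⊆ Set.Ioo 0 1) (hAmeas : MeasureTheory.volume A > ENNReal.ofReal (β / k)) :
    MeasureTheory.volume
      {x : ℝ | ∃ g : Fin k → ℝ, (∀ i, g i ∈ A) ∧ x = Int.fract (∑ i, g i)} >
      ENNReal.ofReal β := by
  have hS : {x : ℝ | ∃ g : Fin k → ℝ, (∀ i, g i ∈ A) ∧ x = Int.fract (∑ i, g i)} =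
      Int.fract '' (k • A) := by
    ext x
    simp only [mem_image, Set.mem_nsmul_iff_sum]
    grind
  obtain ⟨n, hn⟩ := eventually_atTop.1 <|
    eventually_lt_volume_gridCellsIn hAopen (hA.trans Ioo_subset_Ico_self) hAmeas
  obtain ⟨p, hnp, hp⟩ := Nat.exists_infinite_primes (max n (k + 1))
  obtain ⟨hβT, hT⟩ := ENNReal.ofReal_lt_ofReal_iff'.1 (hn p (le_of_max_le_left hnp))
  have hTne : (gridCellsIn A p).Nonempty := by
    rw [← card_pos]; exact_mod_cast (div_pos_iff_of_pos_right (by exact_mod_cast hp.pos)).1 hT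
  set N := k • gridCellsIn A p + range k
  have hD := min_le_card_image_mod_nsmul_add_range hp hTne (gridCellsIn_subset_range A p)
    (by omega) (by omega : k ≤ p)
  have hDpos : 0 < #(N.image (· % p)) :=
    (lt_min hp.pos (Nat.mul_pos (by omega) hTne.card_pos)).trans_le hD
  rw [gt_iff_lt, hS]
  calc ENNReal.ofReal β < ENNReal.ofReal (#(N.image (· % p)) / p) :=
        ENNReal.ofReal_lt_ofReal_iff'.2 ⟨lt_div_of_min_le hβ1 (by omega) hp.pos hβT hD,
          div_pos (by exact_mod_cast hDpos) (by exact_mod_cast hp.pos)⟩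
    _ = volume (⋃ r ∈ N.image (· % p), gridCell p r) := (volume_biUnion_gridCell _ _).symm
    _ ≤ _ := measure_mono <| biUnion_gridCell_mod_subset_image_fract_nsmul hp.pos
      fun _ => gridCell_subset_of_mem_gridCellsIn

/-- **Modular Brunn–Minkowski inequality (Remark after Theorem 2).**
If `A ⊆ (0,1)` is open with `μ(A) > β/k`, then the reduction mod 1 of the
`k`-fold sumset of `A` has Lebesgue measure `> β`. -/
theorem modular_brunn_minkowski_measure (k : ℕ) (hk : 2 ≤ k) (β : ℝ)
    (hβ0 : 0 < β) (hβ1 : β < 1) (A : Set ℝ) (hAopen : IsOpen A)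
    (hA : A ⊆ Set.Ioo 0 1) (hAmeas : MeasureTheory.volume A > ENNReal.ofReal (β / k)) :
    MeasureTheory.volume
      {x : ℝ | ∃ g : Fin k → ℝ, (∀ i, g i ∈ A) ∧ x = Int.fract (∑ i, g i)} >
      ENNReal.ofReal β :=
  modular_brunn_minkowski_measure_general k hk β hβ1 A hAopen hA hAmeas
end
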